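/- Define V_n for n ≥ 4 as in the equilateral-triangle conditional quantization: V_n = (1/36)(1/(n_1-1)^2 + 1/(n_2-1)^2 + 1/(n_3-1)^2) with n_1, n_2, n_3 determined by n mod 3 (n = 3k gives all equal to k+1; n = 3k+1 gives one equal to k+2, two equal to k+1; n = 3k+2 gives two equal to k+2, one equal to k+1). Then lim_{n→∞} n^2 V_n = 3/4. -/
import Mathlib


open Filter Real

lemma sq_bound (n d : ℕ) (hn : 4 ≤ n) (hl : (n:ℝ)/3 - 1 ≤ (d:ℝ))
    (hu : (d:ℝ) ≤ (n:ℝ)/3 + 1) :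
    ((n:ℝ)/((n:ℝ)/3+1))^2 ≤ (n:ℝ)^2 * (1/(d:ℝ)^2) ∧
      (n:ℝ)^2 * (1/(d:ℝ)^2) ≤ ((n:ℝ)/((n:ℝ)/3-1))^2 := by
  have hn4 : (4:ℝ) ≤ n := by exact_mod_cast hn
  have hdpos : (0:ℝ) < d := by linarith
  have heq : (n:ℝ)^2 * (1/(d:ℝ)^2) = ((n:ℝ)/(d:ℝ))^2 := by
    field_simp
  rw [heq]
  constructor
  · gcongr <;> linarith
  · gcongr <;> linarith

lemma lim_lb : Tendsto (fun n : ℕ => (1/12) * ((n:ℝ)/((n:ℝ)/3+1))^2) atTop (nhds (3/4)) := by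
  have h : ∀ n : ℕ, (n:ℝ)/((n:ℝ)/3+1) = 3 - 9/((n:ℝ)+3) := by
    intro n
    have h3 : (n:ℝ)+3 ≠ 0 := by positivity
    field_simp
    ring
  have hten : Tendsto (fun n : ℕ => (1/12) * (3 - 9/((n:ℝ)+3))^2) atTop (nhds (3/4)) := by
    have h0 : Tendsto (fun n : ℕ => 9/((n:ℝ)+3)) atTop (nhds 0) :=
      Tendsto.div_atTop tendsto_const_nhds
        (tendsto_atTop_add_const_right _ 3 tendsto_natCast_atTop_atTop)
    have := (((tendsto_const_nhds (x := (3:ℝ))).sub h0).pow 2).const_mul (1/12 : ℝ)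
    convert this using 2
    norm_num
  exact hten.congr (fun n => by rw [h n])

lemma lim_ub : Tendsto (fun n : ℕ => (1/12) * ((n:ℝ)/((n:ℝ)/3-1))^2) atTop (nhds (3/4)) := by
  have hten : Tendsto (fun n : ℕ => (1/12) * (3 + 9/((n:ℝ)-3))^2) atTop (nhds (3/4)) := by
    have h0 : Tendsto (fun n : ℕ => 9/((n:ℝ)-3)) atTop (nhds 0) := by
      apply Tendsto.div_atTop tendsto_const_nhds
      have := tendsto_atTop_add_const_right atTop (-3 : ℝ) tendsto_natCast_atTop_atTop
      simpa [sub_eq_add_neg] using this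
    have := (((tendsto_const_nhds (x := (3:ℝ))).add h0).pow 2).const_mul (1/12 : ℝ)
    convert this using 2
    norm_num
  apply hten.congr'
  filter_upwards [eventually_ge_atTop 4] with n hn
  have hn4 : (4:ℝ) ≤ n := by exact_mod_cast hn
  have h3 : (n:ℝ)-3 ≠ 0 := by linarith
  have h4 : (n:ℝ)/3-1 ≠ 0 := by intro h; nlinarith
  congr 1
  field_simp
  ring

/-- The `n`th conditional unconstrained quantization error for the uniform distribution on
the boundary of the unit equilateral triangle with the three vertices as conditional set:
`V n = (1/36)(1/(n₁-1)² + 1/(n₂-1)² + 1/(n₃-1)²)` where, writing `n = 3k + r` with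
`r = n % 3`, the numbers `nⱼ - 1` are `k,k,k` if `r = 0`; `k+1,k,k` if `r = 1`;
and `k+1,k+1,k` if `r = 2`. -/
noncomputable def triV (n : ℕ) : ℝ :=
  (1/36) * (1 / ((n / 3 + (if 1 ≤ n % 3 then 1 else 0) : ℕ) : ℝ)^2
          + 1 / ((n / 3 + (if 2 ≤ n % 3 then 1 else 0) : ℕ) : ℝ)^2
          + 1 / ((n / 3 : ℕ) : ℝ)^2)

/-- The 1-dimensional conditional unconstrained quantization coefficient exists and
equals `3/4`: `n² V_n → 3/4`. -/
theorem stmt11 :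
    Tendsto (fun n : ℕ => (n : ℝ)^2 * triV n) atTop (nhds (3/4)) := by
  refine tendsto_of_tendsto_of_tendsto_of_le_of_le' lim_lb lim_ub ?_ ?_ <;>
    filter_upwards [eventually_ge_atTop 4] with n hn
  all_goals {
    have hn4 : (4:ℝ) ≤ n := by exact_mod_cast hn
    set e₁ : ℕ := (if 1 ≤ n % 3 then 1 else 0) with he₁
    set e₂ : ℕ := (if 2 ≤ n % 3 then 1 else 0) with he₂
    have he₁1 : e₁ ≤ 1 := by rw [he₁]; split_ifs <;> norm_num
    have he₂1 : e₂ ≤ 1 := by rw [he₂]; split_ifs <;> norm_num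
    have hmod := Nat.div_add_mod n 3
    have hmodlt : n % 3 < 3 := Nat.mod_lt n (by norm_num)
    have hkl : (n:ℝ)/3 - 1 ≤ ((n/3 : ℕ) : ℝ) := by
      have : (n:ℝ) = 3 * ((n/3:ℕ):ℝ) + ((n%3:ℕ):ℝ) := by exact_mod_cast hmod.symm
      have h2 : ((n%3:ℕ):ℝ) < 3 := by exact_mod_cast hmodlt
      linarith
    have hku : ((n/3 : ℕ) : ℝ) ≤ (n:ℝ)/3 := by
      have : (n:ℝ) = 3 * ((n/3:ℕ):ℝ) + ((n%3:ℕ):ℝ) := by exact_mod_cast hmod.symm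
      have h2 : (0:ℝ) ≤ ((n%3:ℕ):ℝ) := by positivity
      linarith
    have he₁r : ((e₁:ℕ):ℝ) ≤ 1 := by exact_mod_cast he₁1
    have he₂r : ((e₂:ℕ):ℝ) ≤ 1 := by exact_mod_cast he₂1
    have hb1 := sq_bound n (n/3 + e₁) hn
      (by push_cast; linarith [Nat.cast_nonneg (α := ℝ) e₁])
      (by push_cast; linarith)
    have hb2 := sq_bound n (n/3 + e₂) hn
      (by push_cast; linarith [Nat.cast_nonneg (α := ℝ) e₂])
      (by push_cast; linarith)
    have hb3 := sq_bound n (n/3) hn hkl (by linarith)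
    have hexp : (n:ℝ)^2 * triV n =
        (1/36) * ((n:ℝ)^2 * (1/(((n/3 + e₁ : ℕ)):ℝ)^2)
          + (n:ℝ)^2 * (1/(((n/3 + e₂ : ℕ)):ℝ)^2)
          + (n:ℝ)^2 * (1/(((n/3 : ℕ)):ℝ)^2)) := by
      simp only [triV, he₁, he₂]; ring
    rw [hexp]
    obtain ⟨h1l, h1u⟩ := hb1
    obtain ⟨h2l, h2u⟩ := hb2
    obtain ⟨h3l, h3u⟩ := hb3
    linarith
  }
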